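/- Let C be a cartesian closed category with finite products and let P : C^op → Pos be a universal slat-doctrine (reindexing along projections has right adjoints ∀_{pr} satisfying Beck–Chevalley). For objects A₁, A₂ of C and the projection pr₁ : A₁×A₂ → A₁, define a map ∀^ex_{pr₁} : P^ex(A₁×A₂) → P^ex(A₁) on the existential completion by (A₁×A₂, B, α) ↦ (A₁, B^{A₂}, ∀_{⟨pr₁,pr₃⟩}(P_{⟨pr₁,pr₂,ev⟨pr₂,pr₃⟩⟩}(α))), where pr_i are the projections from A₁×A₂×B^{A₂} and ev : A₂×B^{A₂} → B is evaluation. Then ∀^ex_{pr₁} is right adjoint to P^ex_{pr₁}: for all (A₁,C,γ) ∈ P^ex(A₁) and (A₁×A₂,B,α) ∈ P^ex(A₁×A₂), P^ex_{pr₁}(A₁,C,γ) ≤ (A₁×A₂,B,α) if and only if (A₁,C,γ) ≤ ∀^ex_{pr₁}(A₁×A₂,B,α). -/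

import Mathlib

open CategoryTheory CategoryTheory.Limits CategoryTheory.MonoidalCategory Opposite
open CategoryTheory.CartesianClosed

universe u v

variable {C : Type u} [Category.{v} C] [CartesianMonoidalCategory C] [MonoidalClosed C]

/-- The fibre of a slat-doctrine `P : Cᵒᵖ ⥤ Pos` over an object `X` of `C`. -/
abbrev Fib (P : Cᵒᵖ ⥤ PartOrd) (X : C) : Type _ := (P.obj (op X) : Type _)

/-- Reindexing along `f : X ⟶ Y` (the monotone map `P f : P Y → P X`). -/
def rIdx (P : Cᵒᵖ ⥤ PartOrd) {X Y : C} (f : X ⟶ Y) (a : Fib P Y) : Fib P X :=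
  (P.map f.op).hom.toFun a

/-- Objects of the fibre of the existential completion over `A`: triples `(A,B,α)` with
`α ∈ P (A × B)`. -/
abbrev QObj (P : Cᵒᵖ ⥤ PartOrd) (A : C) : Type _ := Σ B : C, Fib P (A ⊗ B)

/-- The order of the existential completion `P^ex`:
`(A,B,α) ≤ (A,C,γ)` iff there is `f : A×B ⟶ C` with `α ≤ P⟨pr_A,f⟩(γ)`. -/
def ExLe (P : Cᵒᵖ ⥤ PartOrd) {A : C} (x y : QObj P A) : Prop :=
  ∃ f : A ⊗ x.1 ⟶ y.1,
    x.2 ≤ rIdx P (CartesianMonoidalCategory.lift (CartesianMonoidalCategory.fst A x.1) f) y.2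

/-- Reindexing of the existential completion along `f : X ⟶ Y`. -/
def QReindex (P : Cᵒᵖ ⥤ PartOrd) {X Y : C} (f : X ⟶ Y) (y : QObj P Y) : QObj P X :=
  ⟨y.1, rIdx P (f ▷ y.1) y.2⟩

/-- The map `⟨pr₁, pr₂, ev⟨pr₂,pr₃⟩⟩ : A₁ × B^{A₂} × A₂ ⟶ A₁ × A₂ × B` (with the triple
products bracketed as shown), where `ev` is the evaluation of the exponential. -/
noncomputable def evMap (A₁ A₂ B : C) : (A₁ ⊗ (A₂ ⟹ B)) ⊗ A₂ ⟶ (A₁ ⊗ A₂) ⊗ B :=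
  CartesianMonoidalCategory.lift
    (CartesianMonoidalCategory.lift
      (CartesianMonoidalCategory.fst _ _ ≫ CartesianMonoidalCategory.fst _ _)
      (CartesianMonoidalCategory.snd _ _))
    (CartesianMonoidalCategory.lift (CartesianMonoidalCategory.snd _ _)
        (CartesianMonoidalCategory.fst _ _ ≫ CartesianMonoidalCategory.snd _ _) ≫
      (ihom.ev A₂).app B)

/-- The universal quantifier `∀^ex_{pr₁}` of the existential completion along
`pr₁ : A₁ × A₂ ⟶ A₁`, defined via exponentials from the universal structure `Au` of `P`:
`(A₁×A₂, B, α) ↦ (A₁, B^{A₂}, ∀_{⟨pr₁,pr₃⟩}(P_{⟨pr₁,pr₂,ev⟨pr₂,pr₃⟩⟩}(α)))`. -/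
noncomputable def exAll (P : Cᵒᵖ ⥤ PartOrd)
    (Au : ∀ {X Y : C}, Fib P (X ⊗ Y) → Fib P X) (A₁ A₂ : C)
    (x : QObj P (A₁ ⊗ A₂)) : QObj P A₁ :=
  ⟨A₂ ⟹ x.1, Au (rIdx P (evMap A₁ A₂ x.1) x.2)⟩

/-!
Beck–Chevalley and `P_pr ⊣ ∀` turn a witness `g : A₁ × D ⟶ B^{A₂}` of the right-hand side into
the condition `P_pr(γ) ≤ P_{⟨pr₁, pr₃, ev ∘ (g × A₂)⟩}(α)` over `A₁ × D × A₂`, while a witness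
`f : A₁ × A₂ × D ⟶ B` of the left-hand side gives the same condition once the last two factors
are exchanged. Currying and the exchange isomorphism both parametrize all maps
`A₁ × D × A₂ ⟶ B`, so the two existential statements coincide.
-/

open CartesianMonoidalCategory

section Reindexing

omit [CartesianMonoidalCategory C] [MonoidalClosed C]

variable (P : Cᵒᵖ ⥤ PartOrd)

theorem rIdx_id {X : C} (a : Fib P X) : rIdx P (𝟙 X) a = a := by
  simp [rIdx]

theorem rIdx_comp {X Y Z : C} (f : X ⟶ Y) (g : Y ⟶ Z) (a : Fib P Z) :
    rIdx P (f ≫ g) a = rIdx P f (rIdx P g a) := by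
  simp [rIdx]

theorem rIdx_mono {X Y : C} (f : X ⟶ Y) : Monotone (rIdx P f) :=
  (P.map f.op).hom.monotone

theorem rIdx_hom_le_rIdx_hom_iff {X Y : C} (e : X ≅ Y) {a b : Fib P Y} :
    rIdx P e.hom a ≤ rIdx P e.hom b ↔ a ≤ b := by
  refine ⟨fun h => ?_, fun h => rIdx_mono P e.hom h⟩
  simpa only [← rIdx_comp, e.inv_hom_id, rIdx_id] using rIdx_mono P e.inv h

end Reindexing

omit [MonoidalClosed C] in
theorem le_rIdx_iff_of_adjoint (P : Cᵒᵖ ⥤ PartOrd)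
    (Au : ∀ {X Y : C}, Fib P (X ⊗ Y) → Fib P X)
    (adj : ∀ {X Y : C} (b : Fib P X) (a : Fib P (X ⊗ Y)),
      rIdx P (fst X Y) b ≤ a ↔ b ≤ Au a)
    (bc : ∀ {X X' Y : C} (f : X ⟶ X') (a : Fib P (X' ⊗ Y)),
      rIdx P f (Au a) = Au (rIdx P (f ▷ Y) a))
    {X X' Y : C} (f : X ⟶ X') (b : Fib P X) (a : Fib P (X' ⊗ Y)) :
    b ≤ rIdx P f (Au a) ↔ rIdx P (fst X Y) b ≤ rIdx P (f ▷ Y) a := by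
  rw [bc, adj]

omit [MonoidalClosed C] in
@[simps]
def swapRightIso (X Y Z : C) : (X ⊗ Z) ⊗ Y ≅ (X ⊗ Y) ⊗ Z where
  hom := lift (fst X Z ▷ Y) (fst _ _ ≫ snd _ _)
  inv := lift (fst X Y ▷ Z) (fst _ _ ≫ snd _ _)

omit [MonoidalClosed C] in
theorem swapRightIso_hom_comp_whiskerRight_fst (X Y Z : C) :
    (swapRightIso X Y Z).hom ≫ (fst X Y ▷ Z) = fst (X ⊗ Z) Y := by
  ext <;> simp

theorem whiskerRight_lift_comp_evMap {T A₁ A₂ B : C} (p : T ⟶ A₁) (g : T ⟶ A₂ ⟹ B) :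
    (lift p g ▷ A₂) ≫ evMap A₁ A₂ B =
      lift (p ▷ A₂) (lift (snd _ _) (fst _ _) ≫ MonoidalClosed.uncurry g) := by
  rw [MonoidalClosed.uncurry_eq]
  ext : 1
  · ext <;> simp [evMap]
  · have hswap : lift p g ▷ A₂ ≫ lift (snd _ _) (fst _ _ ≫ snd _ _) =
        lift (snd T A₂) (fst T A₂) ≫ A₂ ◁ g := by
      ext <;> simp
    simp only [evMap, Category.assoc, lift_snd]
    rw [reassoc_of% hswap]

theorem surjective_lift_snd_fst_comp_uncurry (T A B : C) :
    Function.Surjective fun g : T ⟶ A ⟹ B => lift (snd _ _) (fst _ _) ≫ MonoidalClosed.uncurry g :=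
  fun h => ⟨MonoidalClosed.curry (lift (snd _ _) (fst _ _) ≫ h), by
    simp only [MonoidalClosed.uncurry_curry, ← Category.assoc, comp_lift, lift_snd, lift_fst,
      lift_fst_snd, Category.id_comp]⟩

/-- If `C` is cartesian closed and `P` is a universal slat-doctrine (with right adjoints
`Au` along projections satisfying Beck–Chevalley), then `∀^ex_{pr₁}` is right adjoint to
the reindexing `P^ex_{pr₁}` in the existential completion. -/
theorem exAll_right_adjoint (P : Cᵒᵖ ⥤ PartOrd)
    (Au : ∀ {X Y : C}, Fib P (X ⊗ Y) → Fib P X)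
    (adj : ∀ {X Y : C} (b : Fib P X) (a : Fib P (X ⊗ Y)),
      rIdx P (CartesianMonoidalCategory.fst X Y) b ≤ a ↔ b ≤ Au a)
    (bc : ∀ {X X' Y : C} (f : X ⟶ X') (a : Fib P (X' ⊗ Y)),
      rIdx P f (Au a) = Au (rIdx P (f ▷ Y) a))
    (A₁ A₂ : C) (y : QObj P A₁) (x : QObj P (A₁ ⊗ A₂)) :
    ExLe P (QReindex P (CartesianMonoidalCategory.fst A₁ A₂) y) x ↔
      ExLe P y (exAll P Au A₁ A₂ x) := by
  obtain ⟨D, γ⟩ := y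
  obtain ⟨B, α⟩ := x
  let e := swapRightIso A₁ A₂ D
  let Q : ((A₁ ⊗ D) ⊗ A₂ ⟶ B) → Prop := fun h =>
    rIdx P (fst (A₁ ⊗ D) A₂) γ ≤ rIdx P (lift (fst A₁ D ▷ A₂) h) α
  calc ExLe P (QReindex P (fst A₁ A₂) ⟨D, γ⟩) ⟨B, α⟩
      ↔ ∃ f, Q (e.hom ≫ f) := by
        refine exists_congr fun (f : (A₁ ⊗ A₂) ⊗ D ⟶ B) => ?_
        change rIdx P (fst A₁ A₂ ▷ D) γ ≤ rIdx P (lift (fst (A₁ ⊗ A₂) D) f) α ↔ _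
        rw [← rIdx_hom_le_rIdx_hom_iff P e, ← rIdx_comp, ← rIdx_comp,
          swapRightIso_hom_comp_whiskerRight_fst]
        simp [Q, e]
    _ ↔ ∃ h, Q h := e.symm.homFromEquiv.surjective.exists.symm
    _ ↔ ∃ g, Q (lift (snd _ _) (fst _ _) ≫ MonoidalClosed.uncurry g) :=
        (surjective_lift_snd_fst_comp_uncurry _ _ _).exists
    _ ↔ ExLe P ⟨D, γ⟩ (exAll P Au A₁ A₂ ⟨B, α⟩) := by
        refine exists_congr fun g => ?_
        change _ ↔ γ ≤ rIdx P (lift (fst A₁ D) g) (Au (rIdx P (evMap A₁ A₂ B) α))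
        rw [le_rIdx_iff_of_adjoint P Au adj bc, ← rIdx_comp, whiskerRight_lift_comp_evMap]
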